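/- arXiv:2212.03340 — 2 statements merged into one kernel-verified Lean document; each statement's English description precedes it below -/
import Mathlib

section
/- Fix reference prices P_X, P_Y > 0, p₀ = P_X/P_Y, and budget B > 0. Let ψ₁, ψ₂ be measurable belief functions with optimal feasible triples (L₁, X₁, Y₁) and (L₂, X₂, Y₂) respectively, and let (L, X₀, Y₀) be an optimal feasible triple for the belief ψ₁ + ψ₂, where in each case the reserve and budget constraints hold with equality and the respective optimal values are finite. Then there exist constants a, b ≥ 0 such that L(p)² = a·L₁(p)² + b·L₂(p)² for almost every p > 0 at which φ_{ψ₁}(arccot p) + φ_{ψ₂}(arccot p) > 0. -/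
open MeasureTheory Set
open scoped ENNReal

noncomputable section

/-- The open positive orthant of `ℝ²`, on which prices live. -/
def orth : Set (ℝ × ℝ) := Set.Ioi 0 ×ˢ Set.Ioi 0

/-- The expected CFMM inefficiency `I_ψ(L) = ∬ ψ(p_X,p_Y) / (p_Y·L(p_X/p_Y)) dp_X dp_Y`,
a Lebesgue integral valued in `[0,∞]`; `ENNReal` division encodes the conventions
`c/0 = ∞` for `c > 0` and `0/0 = 0`. -/
def Ineff (ψ : ℝ × ℝ → ℝ) (L : ℝ → ℝ) : ℝ≥0∞ :=
  ∫⁻ q in orth, ENNReal.ofReal (ψ q) / ENNReal.ofReal (q.2 * L (q.1 / q.2))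

/-- Feasibility of a triple `(L, X₀, Y₀)` of a liquidity allocation and initial reserves,
for reference prices `P_X, P_Y` (so `p₀ = P_X / P_Y`) and budget `B`. -/
def Feasible (PX PY B : ℝ) (L : ℝ → ℝ) (X0 Y0 : ℝ) : Prop :=
  Measurable L ∧ (∀ p ∈ Set.Ioi (0:ℝ), 0 ≤ L p) ∧ 0 ≤ X0 ∧ 0 ≤ Y0 ∧
  (∫⁻ p in Set.Ioc (0:ℝ) (PX / PY), ENNReal.ofReal (L p / p)) ≤ ENNReal.ofReal Y0 ∧
  (∫⁻ p in Set.Ioi (PX / PY), ENNReal.ofReal (L p / p ^ 2)) ≤ ENNReal.ofReal X0 ∧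
  PX * X0 + PY * Y0 ≤ B

/-- A feasible triple is optimal for the belief `ψ` if it minimizes the expected CFMM
inefficiency over all feasible triples. -/
def IsOptimal (PX PY B : ℝ) (ψ : ℝ × ℝ → ℝ) (L : ℝ → ℝ) (X0 Y0 : ℝ) : Prop :=
  Feasible PX PY B L X0 Y0 ∧
  ∀ L' X0' Y0', Feasible PX PY B L' X0' Y0' → Ineff ψ L ≤ Ineff ψ L'

/-- Inverse cotangent with values in `(0, π/2)` for positive arguments. -/
def arccot (p : ℝ) : ℝ := Real.pi / 2 - Real.arctan p

/-- The angular marginal `φ_ψ(θ) = ∫_0^∞ ψ(r cos θ, r sin θ) dr`, valued in `[0,∞]`. -/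
def phiAng (ψ : ℝ × ℝ → ℝ) (θ : ℝ) : ℝ≥0∞ :=
  ∫⁻ r in Set.Ioi (0:ℝ), ENNReal.ofReal (ψ (r * Real.cos θ, r * Real.sin θ))

/-- Optimality for `ψ`, with the reserve and budget constraints holding with equality and
a finite optimal value. -/
def IsOptimalEq (PX PY B : ℝ) (ψ : ℝ × ℝ → ℝ) (L : ℝ → ℝ) (X0 Y0 : ℝ) : Prop :=
  IsOptimal PX PY B ψ L X0 Y0 ∧
  (∫⁻ p in Set.Ioc (0:ℝ) (PX / PY), ENNReal.ofReal (L p / p)) = ENNReal.ofReal Y0 ∧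
  (∫⁻ p in Set.Ioi (PX / PY), ENNReal.ofReal (L p / p ^ 2)) = ENNReal.ofReal X0 ∧
  PX * X0 + PY * Y0 = B ∧
  Ineff ψ L < ⊤

/-!
Write `g(p) = ∫_{y>0} ψ(p y, y) dy` (`rayMass`) and `w(p) = P_Y / p` for `p ≤ p₀`, `P_X / p²`
for `p > p₀` (`budgetWeight`). Then `I_ψ(L) = ∫ g / L` and the constraints amount to
`∫ w L ≤ B`. Cauchy–Schwarz gives `(∫ √(g w))² ≤ I_ψ(L) · ∫ w L`, and the allocation proportional
to `√(g / w)` attains this bound, so an optimal `L` is an equality case: `g = c · w · L²` a.e.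
Since `g` is additive in `ψ` and `φ_ψ(arccot p) = √(1 + p²) · g(p)`, the relations for `ψ₁`,
`ψ₂` and `ψ₁ + ψ₂` combine linearly, and where `φ_{ψ₁} + φ_{ψ₂} > 0` the constant for
`ψ₁ + ψ₂` is nonzero and can be divided out.
-/

open scoped NNReal

namespace ENNReal

theorem two_mul_mul_le_sq_add_sq (a b : ℝ≥0∞) : 2 * a * b ≤ a ^ 2 + b ^ 2 := by
  rcases eq_or_ne a ⊤ with rfl | ha
  · simp [top_pow two_ne_zero]
  rcases eq_or_ne b ⊤ with rfl | hb
  · simp [top_pow two_ne_zero]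
  lift a to ℝ≥0 using ha
  lift b to ℝ≥0 using hb
  exact_mod_cast two_mul_le_add_sq a b

theorem eq_of_two_mul_mul_eq_sq_add_sq {a b : ℝ≥0∞} (ha : a ≠ ⊤) (hb : b ≠ ⊤)
    (h : 2 * a * b = a ^ 2 + b ^ 2) : a = b := by
  lift a to ℝ≥0 using ha
  lift b to ℝ≥0 using hb
  have h' : (2 * a * b : ℝ) = a ^ 2 + b ^ 2 := by exact_mod_cast h
  have : ((a : ℝ) - b) ^ 2 = 0 := by linarith
  exact_mod_cast (sub_eq_zero.mp (pow_eq_zero_iff two_ne_zero |>.mp this))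

theorem rpow_half_sq (a : ℝ≥0∞) : (a ^ (1 / 2 : ℝ)) ^ 2 = a := by
  rw [← rpow_natCast, ← rpow_mul]; norm_num

theorem rpow_half_eq_ofReal_sqrt {a : ℝ≥0∞} (ha : a ≠ ⊤) :
    a ^ (1 / 2 : ℝ) = ENNReal.ofReal √a.toReal := by
  rw [Real.sqrt_eq_rpow, ← ofReal_rpow_of_nonneg toReal_nonneg (by norm_num),
    ofReal_toReal ha]

theorem eq_zero_of_div_ofReal_ne_top {a : ℝ≥0∞} {L : ℝ} (hL : L ≤ 0)
    (h : a / ENNReal.ofReal L ≠ ⊤) : a = 0 := by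
  by_contra ha
  exact h (by rw [ofReal_of_nonpos hL, ENNReal.div_zero ha])

theorem div_ofReal_mul_ofReal_mul {a : ℝ≥0∞} {L w : ℝ} (hL : 0 ≤ L) (hw : 0 ≤ w)
    (h : a / ENNReal.ofReal L ≠ ⊤) :
    a / ENNReal.ofReal L * ENNReal.ofReal (w * L) = a * ENNReal.ofReal w := by
  rcases hL.eq_or_lt with rfl | hL
  · simp [eq_zero_of_div_ofReal_ne_top le_rfl h]
  rw [ofReal_mul hw, mul_comm (ENNReal.ofReal w), ← mul_assoc,
    ENNReal.div_mul_cancel (by simpa using hL) ofReal_ne_top]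

theorem eq_ofReal_mul_sq_of_mul_div_eq {a I : ℝ≥0∞} {B L w : ℝ} (hB : 0 < B) (hI : I ≠ ⊤)
    (hL : 0 ≤ L) (hw : 0 ≤ w) (ha : a / ENNReal.ofReal L ≠ ⊤)
    (h : ENNReal.ofReal B * (a / ENNReal.ofReal L) = I * ENNReal.ofReal (w * L)) :
    a = ENNReal.ofReal (I.toReal / B * w * L ^ 2) := by
  rcases hL.eq_or_lt with rfl | hL
  · simp [eq_zero_of_div_ofReal_ne_top le_rfl ha]
  have ha_top : a ≠ ⊤ := fun h => ha (by rw [h, top_div_of_ne_top ofReal_ne_top])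
  rw [← ofReal_toReal ha_top, ← ofReal_toReal hI, ← ofReal_div_of_pos hL,
    ← ofReal_mul hB.le, ← ofReal_mul toReal_nonneg,
    ofReal_eq_ofReal_iff (by positivity) (by positivity)] at h
  rw [← ofReal_toReal ha_top]
  congr 1
  field_simp at h ⊢
  linear_combination h

end ENNReal

section CauchySchwarz

variable {α : Type*} [MeasurableSpace α] {μ : Measure α} {u v : α → ℝ≥0∞}

theorem sq_lintegral_sqrt_mul_le (hu : AEMeasurable u μ) (hv : AEMeasurable v μ) :
    (∫⁻ x, (u x * v x) ^ (1 / 2 : ℝ) ∂μ) ^ 2 ≤ (∫⁻ x, u x ∂μ) * ∫⁻ x, v x ∂μ := by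
  have hconj : Real.HolderConjugate 2 2 := ⟨by norm_num, by norm_num, by norm_num⟩
  have h := ENNReal.lintegral_mul_le_Lp_mul_Lq μ hconj (hu.pow_const (1 / 2 : ℝ))
    (hv.pow_const (1 / 2 : ℝ))
  simp only [Pi.mul_apply, ← ENNReal.mul_rpow_of_nonneg _ _ (by norm_num : (0:ℝ) ≤ 1 / 2),
    ← ENNReal.rpow_mul] at h
  norm_num at h
  calc _ ≤ (((∫⁻ x, u x ∂μ) * ∫⁻ x, v x ∂μ) ^ (1 / 2 : ℝ)) ^ 2 := by gcongr
    _ = _ := ENNReal.rpow_half_sq _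

theorem ae_mul_eq_mul_of_sq_lintegral_sqrt_mul_eq (hu : AEMeasurable u μ) (hv : AEMeasurable v μ)
    (hu_fin : ∫⁻ x, u x ∂μ ≠ ⊤) (hv_fin : ∫⁻ x, v x ∂μ ≠ ⊤)
    (h : (∫⁻ x, (u x * v x) ^ (1 / 2 : ℝ) ∂μ) ^ 2 = (∫⁻ x, u x ∂μ) * ∫⁻ x, v x ∂μ) :
    ∀ᵐ x ∂μ, (∫⁻ x, v x ∂μ) * u x = (∫⁻ x, u x ∂μ) * v x := by
  set a := ∫⁻ x, u x ∂μ
  set b := ∫⁻ x, v x ∂μ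
  set F : α → ℝ≥0∞ := fun x => (b * u x) ^ (1 / 2 : ℝ)
  set G : α → ℝ≥0∞ := fun x => (a * v x) ^ (1 / 2 : ℝ)
  have hK : ∫⁻ x, (u x * v x) ^ (1 / 2 : ℝ) ∂μ = (a * b) ^ (1 / 2 : ℝ) := by
    rw [← h, one_div, ← Nat.cast_ofNat, ENNReal.pow_rpow_inv_natCast two_ne_zero]
  have hFG : ∫⁻ x, 2 * F x * G x ∂μ = 2 * (a * b) := by
    have : ∀ x, 2 * F x * G x = 2 * (a * b) ^ (1 / 2 : ℝ) * (u x * v x) ^ (1 / 2 : ℝ) := by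
      intro x
      simp only [F, G, mul_assoc, ← ENNReal.mul_rpow_of_nonneg _ _ (by norm_num : (0:ℝ) ≤ 1 / 2)]
      ring_nf
    simp_rw [this]
    rw [lintegral_const_mul' _ _ (by finiteness), hK, mul_assoc, ← sq, ENNReal.rpow_half_sq]
  have hsq : ∫⁻ x, F x ^ 2 + G x ^ 2 ∂μ = 2 * (a * b) := by
    simp only [F, G, ENNReal.rpow_half_sq]
    rw [lintegral_add_left' (hu.const_mul b), lintegral_const_mul'' _ hu,
      lintegral_const_mul'' _ hv]
    ring
  -- Integrated, the AM-GM inequality `2FG ≤ F² + G²` is an equality, so `F = G` a.e.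
  have hae : (fun x => 2 * F x * G x) =ᵐ[μ] fun x => F x ^ 2 + G x ^ 2 :=
    ae_eq_of_ae_le_of_lintegral_le (ae_of_all _ fun x => ENNReal.two_mul_mul_le_sq_add_sq _ _)
      (by rw [hFG]; finiteness) (by fun_prop) (by rw [hFG, hsq])
  filter_upwards [hae, ae_lt_top' hu hu_fin, ae_lt_top' hv hv_fin] with x hx hux hvx
  have hFx : F x ≠ ⊤ := ENNReal.rpow_ne_top_of_nonneg (by norm_num) (by finiteness)
  have hGx : G x ≠ ⊤ := ENNReal.rpow_ne_top_of_nonneg (by norm_num) (by finiteness)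
  have := congrArg (· ^ 2) (ENNReal.eq_of_two_mul_mul_eq_sq_add_sq hFx hGx hx)
  simpa only [F, G, ENNReal.rpow_half_sq] using this

end CauchySchwarz

section Allocation

variable {α : Type*} {g : α → ℝ≥0∞} {w : α → ℝ}

def sqrtAllocation (g : α → ℝ≥0∞) (w : α → ℝ) (x : α) : ℝ := √((g x).toReal / w x)

theorem ofReal_mul_sqrtAllocation {x : α} (hwx : 0 < w x) (hgx : g x ≠ ⊤) {s : ℝ} (hs : 0 ≤ s) :
    ENNReal.ofReal (w x * (s * sqrtAllocation g w x))
      = ENNReal.ofReal s * (g x * ENNReal.ofReal (w x)) ^ (1 / 2 : ℝ) := by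
  have hsq : w x * sqrtAllocation g w x = √((g x).toReal * w x) := by
    rw [sqrtAllocation, show (g x).toReal * w x = w x ^ 2 * ((g x).toReal / w x) by field_simp,
      Real.sqrt_mul (sq_nonneg _), Real.sqrt_sq hwx.le]
  rw [ENNReal.rpow_half_eq_ofReal_sqrt (by finiteness), ENNReal.toReal_mul,
    ENNReal.toReal_ofReal hwx.le, ← hsq, ← ENNReal.ofReal_mul hs]
  ring_nf

theorem div_ofReal_mul_sqrtAllocation {x : α} (hwx : 0 < w x) (hgx : g x ≠ ⊤) {s : ℝ}
    (hs : 0 < s) :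
    g x / ENNReal.ofReal (s * sqrtAllocation g w x)
      = (g x * ENNReal.ofReal (w x)) ^ (1 / 2 : ℝ) / ENNReal.ofReal s := by
  rcases eq_or_ne (g x) 0 with hg0 | hg0
  · simp [hg0]
  have hG : 0 < (g x).toReal := ENNReal.toReal_pos hg0 hgx
  have hpos : 0 < s * sqrtAllocation g w x := by unfold sqrtAllocation; positivity
  have hsq : √((g x).toReal * w x) * sqrtAllocation g w x = (g x).toReal := by
    rw [sqrtAllocation, ← Real.sqrt_mul (by positivity),
      show (g x).toReal * w x * ((g x).toReal / w x) = (g x).toReal ^ 2 by field_simp,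
      Real.sqrt_sq hG.le]
  rw [ENNReal.rpow_half_eq_ofReal_sqrt (by finiteness), ENNReal.toReal_mul,
    ENNReal.toReal_ofReal hwx.le, ← ENNReal.ofReal_div_of_pos hs, ← ENNReal.ofReal_toReal hgx,
    ← ENNReal.ofReal_div_of_pos hpos, ENNReal.toReal_ofReal hG.le]
  congr 1
  rw [div_eq_div_iff hpos.ne' hs.ne']
  nth_rw 1 [← hsq]
  ring

end Allocation

section WeightedReciprocal

variable {α : Type*} [MeasurableSpace α] {μ : Measure α} {g : α → ℝ≥0∞} {w : α → ℝ}

theorem le_sq_lintegral_sqrt_mul_div_of_minimal {B : ℝ} (hB : 0 < B) (hg : Measurable g)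
    (hw : Measurable w) (hw_pos : ∀ᵐ x ∂μ, 0 < w x) (hg_fin : ∀ᵐ x ∂μ, g x ≠ ⊤) {I : ℝ≥0∞}
    (hmin : ∀ L' : α → ℝ, Measurable L' → (∀ x, 0 ≤ L' x) →
      ∫⁻ x, ENNReal.ofReal (w x * L' x) ∂μ ≤ ENNReal.ofReal B →
      I ≤ ∫⁻ x, g x / ENNReal.ofReal (L' x) ∂μ)
    (hK0 : ∫⁻ x, (g x * ENNReal.ofReal (w x)) ^ (1 / 2 : ℝ) ∂μ ≠ 0)
    (hK_top : ∫⁻ x, (g x * ENNReal.ofReal (w x)) ^ (1 / 2 : ℝ) ∂μ ≠ ⊤) :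
    I ≤ (∫⁻ x, (g x * ENNReal.ofReal (w x)) ^ (1 / 2 : ℝ) ∂μ) ^ 2 / ENNReal.ofReal B := by
  set K := ∫⁻ x, (g x * ENNReal.ofReal (w x)) ^ (1 / 2 : ℝ) ∂μ
  have hK_pos : 0 < K.toReal := ENNReal.toReal_pos hK0 hK_top
  set s := B / K.toReal
  have hs : 0 < s := by positivity
  have hsK : ENNReal.ofReal s * K = ENNReal.ofReal B := by
    rw [ENNReal.ofReal_div_of_pos hK_pos, ENNReal.ofReal_toReal hK_top,
      ENNReal.div_mul_cancel hK0 hK_top]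
  have hbudget' : ∫⁻ x, ENNReal.ofReal (w x * (s * sqrtAllocation g w x)) ∂μ
      = ENNReal.ofReal B := by
    rw [← hsK, ← lintegral_const_mul _ (by fun_prop)]
    refine lintegral_congr_ae ?_
    filter_upwards [hw_pos, hg_fin] with x hwx hgx
    exact ofReal_mul_sqrtAllocation hwx hgx hs.le
  calc I ≤ ∫⁻ x, g x / ENNReal.ofReal (s * sqrtAllocation g w x) ∂μ :=
        hmin _ (by unfold sqrtAllocation; fun_prop)
          (fun x => by unfold sqrtAllocation; positivity) hbudget'.le
    _ = K / ENNReal.ofReal s := by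
        rw [ENNReal.div_eq_inv_mul, ← lintegral_const_mul _ (by fun_prop)]
        refine lintegral_congr_ae ?_
        filter_upwards [hw_pos, hg_fin] with x hwx hgx
        rw [div_ofReal_mul_sqrtAllocation hwx hgx hs, ENNReal.div_eq_inv_mul]
    _ = K ^ 2 / ENNReal.ofReal B := by
        rw [← hsK, sq, ENNReal.mul_div_mul_right _ _ hK0 hK_top]

theorem exists_ae_eq_ofReal_mul_sq_of_minimal {B : ℝ} (hB : 0 < B) (hg : Measurable g)
    (hw : Measurable w) (hw_pos : ∀ᵐ x ∂μ, 0 < w x) {L : α → ℝ} (hL : Measurable L)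
    (hL_nn : ∀ᵐ x ∂μ, 0 ≤ L x)
    (hbudget : ∫⁻ x, ENNReal.ofReal (w x * L x) ∂μ = ENNReal.ofReal B)
    (hfin : ∫⁻ x, g x / ENNReal.ofReal (L x) ∂μ ≠ ⊤)
    (hmin : ∀ L' : α → ℝ, Measurable L' → (∀ x, 0 ≤ L' x) →
      ∫⁻ x, ENNReal.ofReal (w x * L' x) ∂μ ≤ ENNReal.ofReal B →
      ∫⁻ x, g x / ENNReal.ofReal (L x) ∂μ ≤ ∫⁻ x, g x / ENNReal.ofReal (L' x) ∂μ) :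
    ∃ c : ℝ, 0 ≤ c ∧ ∀ᵐ x ∂μ, g x = ENNReal.ofReal (c * w x * L x ^ 2) := by
  set u : α → ℝ≥0∞ := fun x => g x / ENNReal.ofReal (L x)
  set v : α → ℝ≥0∞ := fun x => ENNReal.ofReal (w x * L x)
  set I := ∫⁻ x, u x ∂μ
  set K := ∫⁻ x, (g x * ENNReal.ofReal (w x)) ^ (1 / 2 : ℝ) ∂μ
  have hu : Measurable u := by fun_prop
  have hv : Measurable v := by fun_prop
  have hu_fin : ∀ᵐ x ∂μ, u x ≠ ⊤ := (ae_lt_top hu hfin).mono fun x hx => hx.ne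
  have hg_fin : ∀ᵐ x ∂μ, g x ≠ ⊤ := hu_fin.mono fun x hx hgx =>
    hx (by simp only [u, hgx, ENNReal.top_div_of_ne_top ENNReal.ofReal_ne_top])
  have hK : ∫⁻ x, (u x * v x) ^ (1 / 2 : ℝ) ∂μ = K := by
    refine lintegral_congr_ae ?_
    filter_upwards [hu_fin, hL_nn, hw_pos] with x hux hLx hwx
    rw [ENNReal.div_ofReal_mul_ofReal_mul hLx hwx.le hux]
  have hCS : K ^ 2 ≤ I * ENNReal.ofReal B := by
    simpa only [hK, hbudget] using
      sq_lintegral_sqrt_mul_le (μ := μ) hu.aemeasurable hv.aemeasurable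
  by_cases hK0 : K = 0
  · refine ⟨0, le_rfl, ?_⟩
    filter_upwards [(lintegral_eq_zero_iff (by fun_prop)).mp hK0, hw_pos] with x hx hwx
    rw [Pi.zero_apply, ENNReal.rpow_eq_zero_iff] at hx
    norm_num [(ENNReal.ofReal_pos.mpr hwx).ne'] at hx
    simpa using hx
  have hK_top : K ≠ ⊤ := by
    intro h
    rw [h] at hCS
    exact (ENNReal.mul_ne_top hfin ENNReal.ofReal_ne_top) (top_le_iff.mp (by simpa using hCS))
  have hI_le := le_sq_lintegral_sqrt_mul_div_of_minimal hB hg hw hw_pos hg_fin hmin hK0 hK_top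
  have hKI : K ^ 2 = I * ENNReal.ofReal B :=
    hCS.antisymm <| (ENNReal.le_div_iff_mul_le (Or.inl (by simpa using hB))
      (Or.inl ENNReal.ofReal_ne_top)).mp hI_le
  have hprop := ae_mul_eq_mul_of_sq_lintegral_sqrt_mul_eq hu.aemeasurable hv.aemeasurable hfin
    (by rw [hbudget]; exact ENNReal.ofReal_ne_top) (by rw [hK, hKI, hbudget])
  rw [hbudget] at hprop
  refine ⟨I.toReal / B, by positivity, ?_⟩
  filter_upwards [hprop, hu_fin, hL_nn, hw_pos] with x hx hux hLx hwx
  exact ENNReal.eq_ofReal_mul_sq_of_mul_div_eq hB hfin hLx hwx.le hux hx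

end WeightedReciprocal

theorem lintegral_Ioi_eq_ofReal_mul_lintegral_comp_mul {f : ℝ → ℝ≥0∞} (hf : Measurable f)
    {c : ℝ} (hc : 0 < c) :
    ∫⁻ x in Ioi 0, f x = ENNReal.ofReal c * ∫⁻ x in Ioi 0, f (c * x) := by
  conv_lhs => rw [← Real.smul_map_volume_mul_left hc.ne']
  rw [Measure.restrict_smul, lintegral_smul_measure,
    setLIntegral_map measurableSet_Ioi hf (measurable_const_mul c), preimage_const_mul_Ioi₀ _ hc,
    zero_div, abs_of_pos hc, smul_eq_mul]

def rayMass (ψ : ℝ × ℝ → ℝ) (p : ℝ) : ℝ≥0∞ :=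
  ∫⁻ y in Ioi 0, ENNReal.ofReal (ψ (p * y, y))

section RayMass

variable {ψ : ℝ × ℝ → ℝ}

theorem measurable_rayMass (hψ : Measurable ψ) : Measurable (rayMass ψ) :=
  Measurable.lintegral_prod_right (f := fun p y => ENNReal.ofReal (ψ (p * y, y))) (by fun_prop)

theorem rayMass_add {ψ' : ℝ × ℝ → ℝ} (hψ : Measurable ψ) (hψ_nn : ∀ q, 0 ≤ ψ q)
    (hψ'_nn : ∀ q, 0 ≤ ψ' q) (p : ℝ) :
    rayMass (fun q => ψ q + ψ' q) p = rayMass ψ p + rayMass ψ' p := by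
  simp only [rayMass, ENNReal.ofReal_add (hψ_nn _) (hψ'_nn _)]
  exact lintegral_add_left (by fun_prop) _

theorem phiAng_arccot (hψ : Measurable ψ) (p : ℝ) :
    phiAng ψ (arccot p) = ENNReal.ofReal √(1 + p ^ 2) * rayMass ψ p := by
  have hs : 0 < √(1 + p ^ 2) := Real.sqrt_pos.2 (by positivity)
  rw [phiAng, lintegral_Ioi_eq_ofReal_mul_lintegral_comp_mul (by fun_prop) hs, rayMass, arccot,
    Real.cos_pi_div_two_sub, Real.sin_pi_div_two_sub, Real.sin_arctan, Real.cos_arctan]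
  congr 1
  refine setLIntegral_congr_fun measurableSet_Ioi fun y _ => ?_
  congr 3 <;> field_simp

theorem Ineff_eq_lintegral_rayMass (hψ : Measurable ψ) {L : ℝ → ℝ} (hL : Measurable L) :
    Ineff ψ L = ∫⁻ p in Ioi 0, rayMass ψ p / ENNReal.ofReal (L p) := by
  rw [Ineff, orth, Measure.volume_eq_prod, ← Measure.prod_restrict,
    lintegral_prod_symm _ (by fun_prop)]
  calc _ = ∫⁻ y in Ioi 0, ∫⁻ p in Ioi 0, ENNReal.ofReal (ψ (p * y, y)) / ENNReal.ofReal (L p) := by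
        refine setLIntegral_congr_fun measurableSet_Ioi fun y (hy : 0 < y) => ?_
        rw [lintegral_Ioi_eq_ofReal_mul_lintegral_comp_mul (by fun_prop) hy,
          ← lintegral_const_mul _ (by fun_prop)]
        refine setLIntegral_congr_fun measurableSet_Ioi fun p _ => ?_
        rw [mul_div_cancel_left₀ _ hy.ne', ENNReal.ofReal_mul hy.le, ← mul_div_assoc,
          ENNReal.mul_div_mul_left _ _ (by simpa using hy) ENNReal.ofReal_ne_top, mul_comm y]
    _ = ∫⁻ p in Ioi 0, ∫⁻ y in Ioi 0, ENNReal.ofReal (ψ (p * y, y)) / ENNReal.ofReal (L p) :=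
        lintegral_lintegral_swap (by fun_prop)
    _ = _ := by
        simp_rw [div_eq_mul_inv]
        refine setLIntegral_congr_fun measurableSet_Ioi fun p _ => ?_
        exact lintegral_mul_const _ (by fun_prop)

end RayMass

def budgetWeight (PX PY p : ℝ) : ℝ :=
  if p ≤ PX / PY then PY / p else PX / p ^ 2

section Budget

variable {PX PY : ℝ}

theorem measurable_budgetWeight : Measurable (budgetWeight PX PY) :=
  Measurable.ite (measurableSet_le measurable_id measurable_const) (by fun_prop) (by fun_prop)

theorem budgetWeight_pos (hPX : 0 < PX) (hPY : 0 < PY) {p : ℝ} (hp : 0 < p) :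
    0 < budgetWeight PX PY p := by
  unfold budgetWeight
  split_ifs <;> positivity

theorem lintegral_budgetWeight_mul (hPX : 0 < PX) (hPY : 0 < PY) (L : ℝ → ℝ) :
    ∫⁻ p in Ioi 0, ENNReal.ofReal (budgetWeight PX PY p * L p)
      = ENNReal.ofReal PY * (∫⁻ p in Ioc 0 (PX / PY), ENNReal.ofReal (L p / p))
        + ENNReal.ofReal PX * ∫⁻ p in Ioi (PX / PY), ENNReal.ofReal (L p / p ^ 2) := by
  rw [← Ioc_union_Ioi_eq_Ioi (div_pos hPX hPY).le,
    lintegral_union measurableSet_Ioi Ioc_disjoint_Ioi_same,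
    ← lintegral_const_mul' _ _ ENNReal.ofReal_ne_top,
    ← lintegral_const_mul' _ _ ENNReal.ofReal_ne_top]
  congr 1
  · refine setLIntegral_congr_fun measurableSet_Ioc fun p hp => ?_
    rw [← ENNReal.ofReal_mul hPY.le, budgetWeight, if_pos hp.2, div_mul_eq_mul_div, mul_div_assoc]
  · refine setLIntegral_congr_fun measurableSet_Ioi fun p (hp : PX / PY < p) => ?_
    rw [← ENNReal.ofReal_mul hPX.le, budgetWeight, if_neg hp.not_ge, div_mul_eq_mul_div,
      mul_div_assoc]

theorem exists_feasible_of_lintegral_budgetWeight_mul_le {B : ℝ} (hPX : 0 < PX) (hPY : 0 < PY)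
    (hB : 0 ≤ B) {L : ℝ → ℝ} (hL : Measurable L) (hL_nn : ∀ p ∈ Ioi 0, 0 ≤ L p)
    (hbudget : ∫⁻ p in Ioi 0, ENNReal.ofReal (budgetWeight PX PY p * L p) ≤ ENNReal.ofReal B) :
    ∃ X0 Y0 : ℝ, Feasible PX PY B L X0 Y0 := by
  set IY := ∫⁻ p in Ioc 0 (PX / PY), ENNReal.ofReal (L p / p)
  set IX := ∫⁻ p in Ioi (PX / PY), ENNReal.ofReal (L p / p ^ 2)
  rw [lintegral_budgetWeight_mul hPX hPY] at hbudget
  have hfin : ENNReal.ofReal PY * IY + ENNReal.ofReal PX * IX ≠ ⊤ :=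
    ne_top_of_le_ne_top ENNReal.ofReal_ne_top hbudget
  have hIY : IY ≠ ⊤ := by
    simpa [ENNReal.mul_eq_top, hPY] using (ENNReal.add_ne_top.mp hfin).1
  have hIX : IX ≠ ⊤ := by
    simpa [ENNReal.mul_eq_top, hPX] using (ENNReal.add_ne_top.mp hfin).2
  refine ⟨IX.toReal, IY.toReal, hL, hL_nn, ENNReal.toReal_nonneg, ENNReal.toReal_nonneg,
    (ENNReal.ofReal_toReal hIY).ge, (ENNReal.ofReal_toReal hIX).ge, ?_⟩
  rw [← ENNReal.toReal_ofReal hPX.le, ← ENNReal.toReal_ofReal hPY.le, ← ENNReal.toReal_mul,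
    ← ENNReal.toReal_mul, ← ENNReal.toReal_add (by finiteness) (by finiteness), add_comm]
  exact ENNReal.toReal_le_of_le_ofReal hB hbudget

end Budget

theorem IsOptimalEq.exists_ae_rayMass_eq {PX PY B : ℝ} (hPX : 0 < PX) (hPY : 0 < PY) (hB : 0 < B)
    {ψ : ℝ × ℝ → ℝ} (hψ : Measurable ψ) {L : ℝ → ℝ} {X0 Y0 : ℝ}
    (h : IsOptimalEq PX PY B ψ L X0 Y0) :
    ∃ c : ℝ, 0 ≤ c ∧ ∀ᵐ p ∂volume.restrict (Ioi 0),
      rayMass ψ p = ENNReal.ofReal (c * budgetWeight PX PY p * L p ^ 2) := by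
  obtain ⟨⟨⟨hL, hL_nn, hX0, hY0, -⟩, hopt⟩, hY, hX, hbudget, hfin⟩ := h
  have hIneff := @Ineff_eq_lintegral_rayMass ψ hψ
  refine exists_ae_eq_ofReal_mul_sq_of_minimal hB (measurable_rayMass hψ) measurable_budgetWeight
    ((ae_restrict_mem measurableSet_Ioi).mono fun p hp => budgetWeight_pos hPX hPY hp) hL
    ((ae_restrict_mem measurableSet_Ioi).mono hL_nn) ?_ (hIneff hL ▸ hfin.ne) ?_
  · rw [lintegral_budgetWeight_mul hPX hPY, hY, hX, ← ENNReal.ofReal_mul hPY.le,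
      ← ENNReal.ofReal_mul hPX.le, ← ENNReal.ofReal_add (by positivity) (by positivity), ← hbudget,
      add_comm]
  · intro L' hL' hL'_nn hbudget'
    obtain ⟨X', Y', hfeas⟩ :=
      exists_feasible_of_lintegral_budgetWeight_mul_le hPX hPY hB.le hL' (fun p _ => hL'_nn p)
        hbudget'
    simpa only [hIneff hL, hIneff hL'] using hopt L' X' Y' hfeas

theorem stmt_10 (PX PY B : ℝ) (hPX : 0 < PX) (hPY : 0 < PY) (hB : 0 < B)
    (ψ₁ ψ₂ : ℝ × ℝ → ℝ)
    (hψ₁meas : Measurable ψ₁) (hψ₁nn : ∀ q, 0 ≤ ψ₁ q)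
    (hψ₂meas : Measurable ψ₂) (hψ₂nn : ∀ q, 0 ≤ ψ₂ q)
    (L₁ L₂ L : ℝ → ℝ) (X₁ Y₁ X₂ Y₂ X0 Y0 : ℝ)
    (hopt₁ : IsOptimalEq PX PY B ψ₁ L₁ X₁ Y₁)
    (hopt₂ : IsOptimalEq PX PY B ψ₂ L₂ X₂ Y₂)
    (hopt : IsOptimalEq PX PY B (fun q => ψ₁ q + ψ₂ q) L X0 Y0) :
    ∃ a b : ℝ, 0 ≤ a ∧ 0 ≤ b ∧
      ∀ᵐ p ∂(volume : Measure ℝ),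
        (p ∈ Set.Ioi (0:ℝ) ∧ phiAng ψ₁ (arccot p) + phiAng ψ₂ (arccot p) ≠ 0) →
          L p ^ 2 = a * L₁ p ^ 2 + b * L₂ p ^ 2 := by
  obtain ⟨c₁, hc₁, h₁⟩ := hopt₁.exists_ae_rayMass_eq hPX hPY hB hψ₁meas
  obtain ⟨c₂, hc₂, h₂⟩ := hopt₂.exists_ae_rayMass_eq hPX hPY hB hψ₂meas
  obtain ⟨c, hc, h⟩ :=
    hopt.exists_ae_rayMass_eq hPX hPY hB (ψ := fun q => ψ₁ q + ψ₂ q) (by fun_prop)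
  -- `c = 0` contradicts the hypothesis on `φ` below, so the junk value `c₁ / 0` does no harm.
  refine ⟨c₁ / c, c₂ / c, by positivity, by positivity, ?_⟩
  rw [ae_restrict_iff' measurableSet_Ioi] at h₁ h₂ h
  filter_upwards [h₁, h₂, h] with p h₁ h₂ h ⟨hp, hφ⟩
  have hsum := rayMass_add hψ₁meas hψ₁nn hψ₂nn p
  have hmass : rayMass (fun q => ψ₁ q + ψ₂ q) p ≠ 0 := by
    rw [hsum]
    contrapose! hφ
    rw [phiAng_arccot hψ₁meas, phiAng_arccot hψ₂meas, ← mul_add, hφ, mul_zero]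
  have hc0 : c ≠ 0 := by
    rintro rfl
    simp [h hp] at hmass
  have hw := budgetWeight_pos hPX hPY hp
  rw [h hp, h₁ hp, h₂ hp, ← ENNReal.ofReal_add (by positivity) (by positivity),
    ENNReal.ofReal_eq_ofReal_iff (by positivity) (by positivity)] at hsum
  field_simp
  apply mul_left_cancel₀ hw.ne'
  linear_combination hsum
end
end

section
/- Fix reference prices P_X, P_Y > 0, p₀ = P_X/P_Y, and budget B > 0. Let ψ(p_X, p_Y) = 1 for (p_X, p_Y) ∈ (0, P_X] × (0, P_Y] and 0 otherwise. Set X₀ = B/(2P_X), Y₀ = B/(2P_Y), and L(p) = (1/2)·√(X₀·Y₀·p) for p > 0; this is exactly the liquidity allocation implied by the constant product trading function f(x, y) = x·y with initial reserves (X₀, Y₀) at spot exchange rate p₀. Then (L, X₀, Y₀) is feasible (with all three constraints holding with equality) and optimal for ψ. -/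
/-!
Substituting `p_X = p · p_Y` turns the inefficiency of the uniform belief into
`∫₀^∞ w(p) / L(p) dp`, where `w(p) = ∫ ψ(p · p_Y, p_Y) dp_Y = min(P_Y, P_X / p)` is `boxWeight`,
and the two reserve constraints combine into the single budget bound `∫₀^∞ c(p) L(p) dp ≤ B`
with `c(p) = w(p) / p`. Integrating the AM–GM inequality `2t√(w c) ≤ w / L + t² c L` with
`t = k / B`, where `k = ∫₀^∞ √(w c) = ∫₀^∞ w / √p = 4√(P_X P_Y)`, gives `I_ψ(L') ≥ k² / B` for
every feasible `L'`. The constant-product allocation is proportional to `√p = √(w / c)`, which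
makes AM–GM tight pointwise, and indeed `I_ψ(L) = 16 P_X P_Y / B = k² / B`.
-/

open MeasureTheory Set
open scoped ENNReal

noncomputable section

open Real

theorem setLIntegral_Ioi_eq_Ioc_add_Ioi {a : ℝ} (b : ℝ) (hab : a ≤ b) (f : ℝ → ℝ≥0∞) :
    ∫⁻ p in Ioi a, f p = (∫⁻ p in Ioc a b, f p) + ∫⁻ p in Ioi b, f p := by
  rw [← Ioc_union_Ioi_eq_Ioi hab, lintegral_union measurableSet_Ioi Ioc_disjoint_Ioi_same]

theorem lintegral_Ioc_div_sqrt {k : ℝ} (hk : 0 ≤ k) {a : ℝ} (ha : 0 ≤ a) :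
    ∫⁻ p in Ioc 0 a, ENNReal.ofReal (k / √p) = ENNReal.ofReal (2 * k * √a) := by
  have hrpow : ∀ p ∈ Ioc (0 : ℝ) a, k / √p = k * p ^ (-1 / 2 : ℝ) := fun p hp => by
    rw [sqrt_eq_rpow, show (-1 / 2 : ℝ) = -(1 / 2) by norm_num, rpow_neg hp.1.le, div_eq_mul_inv]
  rw [setLIntegral_congr_fun measurableSet_Ioc fun p hp => congrArg _ (hrpow p hp),
    ← ofReal_integral_eq_lintegral_ofReal]
  · rw [← intervalIntegral.integral_of_le ha, intervalIntegral.integral_const_mul,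
      integral_rpow (Or.inl (by norm_num)), sqrt_eq_rpow, zero_rpow (by norm_num)]
    ring_nf
  · exact (intervalIntegrable_iff_integrableOn_Ioc_of_le ha).mp
      ((intervalIntegral.intervalIntegrable_rpow' (by norm_num)).const_mul k)
  · filter_upwards [ae_restrict_mem measurableSet_Ioc] with p hp
    exact mul_nonneg hk (rpow_nonneg hp.1.le _)

theorem lintegral_Ioi_div_mul_sqrt {k : ℝ} (hk : 0 ≤ k) {a : ℝ} (ha : 0 < a) :
    ∫⁻ p in Ioi a, ENNReal.ofReal (k / (p * √p)) = ENNReal.ofReal (2 * k / √a) := by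
  have hrpow : ∀ p ∈ Ioi a, k / (p * √p) = k * p ^ (-3 / 2 : ℝ) := fun p hp => by
    have hp : 0 < p := ha.trans hp
    rw [sqrt_eq_rpow, show (-3 / 2 : ℝ) = -(1 + 1 / 2) by norm_num, rpow_neg hp.le,
      rpow_add hp, rpow_one, div_eq_mul_inv]
  rw [setLIntegral_congr_fun measurableSet_Ioi fun p hp => congrArg _ (hrpow p hp),
    ← ofReal_integral_eq_lintegral_ofReal]
  · rw [integral_const_mul, integral_Ioi_rpow_of_lt (by norm_num) ha, sqrt_eq_rpow,
      show (-3 / 2 + 1 : ℝ) = -(1 / 2) by norm_num, rpow_neg ha.le]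
    have : a ^ (1 / 2 : ℝ) ≠ 0 := (rpow_pos_of_pos ha _).ne'
    field_simp
  · exact (integrableOn_Ioi_rpow_of_lt (by norm_num) ha).const_mul k
  · filter_upwards [ae_restrict_mem measurableSet_Ioi] with p hp
    exact mul_nonneg hk (rpow_nonneg (ha.trans hp).le _)

theorem lintegral_Ioi_zero_eq_comp_mul_left {y : ℝ} (hy : 0 < y) (g : ℝ → ℝ≥0∞) :
    ∫⁻ x in Ioi 0, g x = ∫⁻ p in Ioi 0, ENNReal.ofReal y * g (y * p) := by
  have h := lintegral_image_eq_lintegral_abs_deriv_mul (measurableSet_Ioi (a := 0))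
    (fun p _ => ((hasDerivAt_id' p).const_mul y).hasDerivWithinAt)
    (mul_right_injective₀ hy.ne').injOn g
  simpa only [image_mul_left_Ioi hy, mul_zero, mul_one, abs_of_pos hy] using h

theorem Ineff_eq_lintegral_div {ψ : ℝ × ℝ → ℝ} {L : ℝ → ℝ} (hψ : Measurable ψ)
    (hL : Measurable L) :
    Ineff ψ L = ∫⁻ p in Ioi 0,
      (∫⁻ y in Ioi 0, ENNReal.ofReal (ψ (y * p, y))) / ENNReal.ofReal (L p) := by
  have hF : Measurable fun q : ℝ × ℝ =>
      ENNReal.ofReal (ψ q) / ENNReal.ofReal (q.2 * L (q.1 / q.2)) := by fun_prop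
  calc Ineff ψ L
      = ∫⁻ y in Ioi 0, ∫⁻ x in Ioi 0,
          ENNReal.ofReal (ψ (x, y)) / ENNReal.ofReal (y * L (x / y)) := by
        rw [Ineff, orth, Measure.volume_eq_prod, ← Measure.prod_restrict,
          lintegral_prod_symm _ hF.aemeasurable]
    _ = ∫⁻ y in Ioi 0, ∫⁻ p in Ioi 0,
          ENNReal.ofReal (ψ (y * p, y)) / ENNReal.ofReal (L p) := by
        refine setLIntegral_congr_fun measurableSet_Ioi fun y hy => ?_
        rw [lintegral_Ioi_zero_eq_comp_mul_left hy]
        refine lintegral_congr fun p => ?_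
        rw [mul_div_cancel_left₀ _ (ne_of_gt hy), ENNReal.ofReal_mul (le_of_lt hy),
          ← mul_div_assoc, ENNReal.mul_div_mul_left _ _ (ENNReal.ofReal_pos.2 hy).ne'
            ENNReal.ofReal_ne_top]
    _ = ∫⁻ p in Ioi 0, ∫⁻ y in Ioi 0,
          ENNReal.ofReal (ψ (y * p, y)) / ENNReal.ofReal (L p) :=
        lintegral_lintegral_swap (by fun_prop)
    _ = _ := by
        simp_rw [div_eq_mul_inv]
        refine lintegral_congr fun p => lintegral_mul_const _ (by fun_prop)

theorem ofReal_two_mul_sqrt_mul_le_div_add {a b : ℝ} (ha : 0 ≤ a) (hb : 0 ≤ b) (x : ℝ) :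
    ENNReal.ofReal (2 * √(a * b)) ≤
      ENNReal.ofReal a / ENNReal.ofReal x + ENNReal.ofReal (b * x) := by
  rcases ha.eq_or_lt with rfl | ha
  · simp
  rcases le_or_gt x 0 with hx | hx
  · rw [ENNReal.ofReal_of_nonpos hx, ENNReal.div_zero (ENNReal.ofReal_pos.2 ha).ne', top_add]
    exact le_top
  have hax : 0 ≤ a / x := div_nonneg ha.le hx.le
  have hbx : 0 ≤ b * x := mul_nonneg hb hx.le
  rw [← ENNReal.ofReal_div_of_pos hx, ← ENNReal.ofReal_add hax hbx]
  refine ENNReal.ofReal_le_ofReal ?_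
  have hsplit : √(a * b) = √(a / x) * √(b * x) := by
    rw [← sqrt_mul hax]
    congr 1
    field_simp
  nlinarith [sq_nonneg (√(a / x) - √(b * x)), sq_sqrt hax, sq_sqrt hbx]

theorem ofReal_sq_div_le_lintegral_div {α : Type*} [MeasurableSpace α] {μ : Measure α}
    {w c L : α → ℝ} (hw : ∀ᵐ x ∂μ, 0 ≤ w x) (hc : ∀ᵐ x ∂μ, 0 ≤ c x) (hcm : Measurable c)
    (hLm : Measurable L) {k B : ℝ} (hk : 0 ≤ k) (hB : 0 < B)
    (hkint : ∫⁻ x, ENNReal.ofReal (√(w x * c x)) ∂μ = ENNReal.ofReal k)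
    (hbudget : ∫⁻ x, ENNReal.ofReal (c x * L x) ∂μ ≤ ENNReal.ofReal B) :
    ENNReal.ofReal (k ^ 2 / B) ≤ ∫⁻ x, ENNReal.ofReal (w x) / ENNReal.ofReal (L x) ∂μ := by
  set t := k / B
  have ht : 0 ≤ t := div_nonneg hk hB.le
  have hamgm : ∀ᵐ x ∂μ, ENNReal.ofReal (2 * t) * ENNReal.ofReal (√(w x * c x)) ≤
      ENNReal.ofReal (w x) / ENNReal.ofReal (L x) +
        ENNReal.ofReal (t ^ 2) * ENNReal.ofReal (c x * L x) := by
    filter_upwards [hw, hc] with x hwx hcx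
    have h := ofReal_two_mul_sqrt_mul_le_div_add hwx (mul_nonneg (sq_nonneg t) hcx) (L x)
    rwa [mul_assoc, ENNReal.ofReal_mul (sq_nonneg t), mul_left_comm, sqrt_mul (sq_nonneg t),
      sqrt_sq ht, ← mul_assoc, ENNReal.ofReal_mul (by positivity)] at h
  have hkey : ENNReal.ofReal (k ^ 2 / B) + ENNReal.ofReal (k ^ 2 / B) ≤
      (∫⁻ x, ENNReal.ofReal (w x) / ENNReal.ofReal (L x) ∂μ) + ENNReal.ofReal (k ^ 2 / B) :=
    calc ENNReal.ofReal (k ^ 2 / B) + ENNReal.ofReal (k ^ 2 / B)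
        = ENNReal.ofReal (2 * t) * ∫⁻ x, ENNReal.ofReal (√(w x * c x)) ∂μ := by
          rw [hkint, ← ENNReal.ofReal_add (by positivity) (by positivity),
            ← ENNReal.ofReal_mul (by positivity)]
          congr 1
          ring
      _ ≤ ∫⁻ x, ENNReal.ofReal (w x) / ENNReal.ofReal (L x) +
            ENNReal.ofReal (t ^ 2) * ENNReal.ofReal (c x * L x) ∂μ := by
          rw [← lintegral_const_mul' _ _ ENNReal.ofReal_ne_top]
          exact lintegral_mono_ae hamgm
      _ = (∫⁻ x, ENNReal.ofReal (w x) / ENNReal.ofReal (L x) ∂μ) +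
            ENNReal.ofReal (t ^ 2) * ∫⁻ x, ENNReal.ofReal (c x * L x) ∂μ := by
          rw [lintegral_add_right' _ (by fun_prop), lintegral_const_mul' _ _ ENNReal.ofReal_ne_top]
      _ ≤ (∫⁻ x, ENNReal.ofReal (w x) / ENNReal.ofReal (L x) ∂μ) +
            ENNReal.ofReal (t ^ 2) * ENNReal.ofReal B := by gcongr
      _ = _ := by
          rw [← ENNReal.ofReal_mul (sq_nonneg t)]
          congr 2
          simp only [t]
          field_simp
  exact ENNReal.le_of_add_le_add_right ENNReal.ofReal_ne_top hkey

def boxWeight (PX PY p : ℝ) : ℝ := min PY (PX / p)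

section boxWeight

variable {PX PY p : ℝ}

theorem measurable_boxWeight : Measurable (boxWeight PX PY) :=
  measurable_const.min (measurable_const.div measurable_id)

theorem boxWeight_nonneg (hPX : 0 ≤ PX) (hPY : 0 ≤ PY) (hp : 0 ≤ p) : 0 ≤ boxWeight PX PY p :=
  le_min hPY (div_nonneg hPX hp)

theorem boxWeight_of_le (hPY : 0 < PY) (hp : 0 < p) (h : p ≤ PX / PY) :
    boxWeight PX PY p = PY :=
  min_eq_left ((le_div_iff₀ hp).2 (by rw [mul_comm]; exact (le_div_iff₀ hPY).1 h))

theorem boxWeight_of_ge (hPY : 0 < PY) (hp : 0 < p) (h : PX / PY ≤ p) :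
    boxWeight PX PY p = PX / p :=
  min_eq_right ((div_le_iff₀ hp).2 (by rw [mul_comm]; exact (div_le_iff₀ hPY).1 h))

theorem lintegral_box_comp_mul (hp : 0 < p) :
    ∫⁻ y in Ioi 0, ENNReal.ofReal (if y * p ∈ Ioc 0 PX ∧ y ∈ Ioc 0 PY then 1 else 0) =
      ENNReal.ofReal (boxWeight PX PY p) := by
  have hbox : ∀ y ∈ Ioi (0 : ℝ),
      ENNReal.ofReal (if y * p ∈ Ioc 0 PX ∧ y ∈ Ioc 0 PY then 1 else 0) =
        (Ioc 0 (boxWeight PX PY p)).indicator 1 y := by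
    intro y hy
    have hmem : (y * p ∈ Ioc 0 PX ∧ y ∈ Ioc 0 PY) ↔ y ∈ Ioc 0 (boxWeight PX PY p) := by
      simp only [mem_Ioc, boxWeight, le_min_iff, le_div_iff₀ hp, mul_pos hy hp, true_and]
      tauto
    simp only [indicator_apply, hmem]
    split_ifs <;> simp
  rw [setLIntegral_congr_fun measurableSet_Ioi hbox, lintegral_indicator_one measurableSet_Ioc,
    Measure.restrict_apply measurableSet_Ioc, inter_eq_left.2 Ioc_subset_Ioi_self,
    Real.volume_Ioc, sub_zero]

theorem Ineff_box {L : ℝ → ℝ} (hL : Measurable L) :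
    Ineff (fun q => if q.1 ∈ Ioc 0 PX ∧ q.2 ∈ Ioc 0 PY then 1 else 0) L =
      ∫⁻ p in Ioi 0, ENNReal.ofReal (boxWeight PX PY p) / ENNReal.ofReal (L p) := by
  have hψ : Measurable fun q : ℝ × ℝ => if q.1 ∈ Ioc 0 PX ∧ q.2 ∈ Ioc 0 PY then (1 : ℝ) else 0 :=
    Measurable.ite (measurableSet_Ioc.prod measurableSet_Ioc) measurable_const measurable_const
  rw [Ineff_eq_lintegral_div hψ hL]
  exact setLIntegral_congr_fun measurableSet_Ioi fun p hp => by rw [lintegral_box_comp_mul hp]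

theorem lintegral_boxWeight_div_sqrt (hPX : 0 < PX) (hPY : 0 < PY) :
    ∫⁻ p in Ioi 0, ENNReal.ofReal (boxWeight PX PY p / √p) =
      ENNReal.ofReal (4 * √(PX * PY)) := by
  have hp0 : 0 < PX / PY := div_pos hPX hPY
  have hlow : ∀ p ∈ Ioc 0 (PX / PY),
      ENNReal.ofReal (boxWeight PX PY p / √p) = ENNReal.ofReal (PY / √p) := fun p hp => by
    rw [boxWeight_of_le hPY hp.1 hp.2]
  have hhigh : ∀ p ∈ Ioi (PX / PY),
      ENNReal.ofReal (boxWeight PX PY p / √p) = ENNReal.ofReal (PX / (p * √p)) := fun p hp => by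
    rw [boxWeight_of_ge hPY (hp0.trans hp) (le_of_lt hp), div_div]
  rw [setLIntegral_Ioi_eq_Ioc_add_Ioi _ hp0.le, setLIntegral_congr_fun measurableSet_Ioc hlow,
    setLIntegral_congr_fun measurableSet_Ioi hhigh, lintegral_Ioc_div_sqrt hPY.le hp0.le,
    lintegral_Ioi_div_mul_sqrt hPX.le hp0, ← ENNReal.ofReal_add (by positivity) (by positivity)]
  congr 1
  obtain ⟨a, ha, rfl⟩ : ∃ a, 0 < a ∧ a ^ 2 = PX := ⟨√PX, sqrt_pos.2 hPX, sq_sqrt hPX.le⟩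
  obtain ⟨b, hb, rfl⟩ : ∃ b, 0 < b ∧ b ^ 2 = PY := ⟨√PY, sqrt_pos.2 hPY, sq_sqrt hPY.le⟩
  rw [← div_pow, ← mul_pow, sqrt_sq (by positivity), sqrt_sq (by positivity)]
  field_simp
  ring

theorem Feasible.lintegral_boxWeight_div_mul_le {B X0 Y0 : ℝ} {L : ℝ → ℝ}
    (hF : Feasible PX PY B L X0 Y0) (hPX : 0 ≤ PX) (hPY : 0 < PY) :
    ∫⁻ p in Ioi 0, ENNReal.ofReal (boxWeight PX PY p / p * L p) ≤ ENNReal.ofReal B := by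
  obtain ⟨-, -, hX0, hY0, hY, hX, hbudget⟩ := hF
  have hp0 : 0 ≤ PX / PY := div_nonneg hPX hPY.le
  have hlow : ∀ p ∈ Ioc 0 (PX / PY), ENNReal.ofReal (boxWeight PX PY p / p * L p) =
      ENNReal.ofReal PY * ENNReal.ofReal (L p / p) := fun p hp => by
    rw [boxWeight_of_le hPY hp.1 hp.2, ← ENNReal.ofReal_mul hPY.le]
    ring_nf
  have hhigh : ∀ p ∈ Ioi (PX / PY), ENNReal.ofReal (boxWeight PX PY p / p * L p) =
      ENNReal.ofReal PX * ENNReal.ofReal (L p / p ^ 2) := fun p hp => by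
    rw [boxWeight_of_ge hPY (hp0.trans_lt hp) (le_of_lt hp), ← ENNReal.ofReal_mul hPX]
    ring_nf
  rw [setLIntegral_Ioi_eq_Ioc_add_Ioi _ hp0, setLIntegral_congr_fun measurableSet_Ioc hlow,
    setLIntegral_congr_fun measurableSet_Ioi hhigh, lintegral_const_mul' _ _ ENNReal.ofReal_ne_top,
    lintegral_const_mul' _ _ ENNReal.ofReal_ne_top]
  calc _ ≤ ENNReal.ofReal PY * ENNReal.ofReal Y0 + ENNReal.ofReal PX * ENNReal.ofReal X0 := by
        gcongr
    _ = ENNReal.ofReal (PX * X0 + PY * Y0) := by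
        rw [← ENNReal.ofReal_mul hPY.le, ← ENNReal.ofReal_mul hPX, add_comm,
          ENNReal.ofReal_add (mul_nonneg hPX hX0) (mul_nonneg hPY.le hY0)]
    _ ≤ ENNReal.ofReal B := ENNReal.ofReal_le_ofReal hbudget

theorem Feasible.ofReal_le_Ineff_box {B X0 Y0 : ℝ} {L : ℝ → ℝ}
    (hF : Feasible PX PY B L X0 Y0) (hPX : 0 < PX) (hPY : 0 < PY) (hB : 0 < B) :
    ENNReal.ofReal (16 * (PX * PY) / B) ≤
      Ineff (fun q => if q.1 ∈ Ioc 0 PX ∧ q.2 ∈ Ioc 0 PY then 1 else 0) L := by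
  have hw : ∀ᵐ p ∂volume.restrict (Ioi 0), 0 ≤ boxWeight PX PY p := by
    filter_upwards [ae_restrict_mem measurableSet_Ioi] with p hp
    exact boxWeight_nonneg hPX.le hPY.le (le_of_lt hp)
  have hc : ∀ᵐ p ∂volume.restrict (Ioi 0), 0 ≤ boxWeight PX PY p / p := by
    filter_upwards [hw, ae_restrict_mem measurableSet_Ioi] with p hwp hp
    exact div_nonneg hwp (le_of_lt hp)
  have hkint : ∫⁻ p in Ioi 0, ENNReal.ofReal (√(boxWeight PX PY p * (boxWeight PX PY p / p))) =
      ENNReal.ofReal (4 * √(PX * PY)) := by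
    rw [← lintegral_boxWeight_div_sqrt hPX hPY]
    refine setLIntegral_congr_fun measurableSet_Ioi fun p hp => ?_
    rw [← mul_div_assoc, sqrt_div (mul_self_nonneg _),
      sqrt_mul_self (boxWeight_nonneg hPX.le hPY.le (le_of_lt hp))]
  have h := ofReal_sq_div_le_lintegral_div hw hc (measurable_boxWeight.div measurable_id) hF.1
    (by positivity) hB hkint (hF.lintegral_boxWeight_div_mul_le hPX.le hPY)
  rw [mul_pow, sq_sqrt (by positivity)] at h
  rw [Ineff_box hF.1]
  convert h using 2
  ring

end boxWeight

section constantProduct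

variable {K : ℝ}

theorem lintegral_Ioc_constantProduct_liquidity_div (hK : 0 ≤ K) {a : ℝ} (ha : 0 ≤ a) :
    ∫⁻ p in Ioc 0 a, ENNReal.ofReal (1 / 2 * √(K * p) / p) = ENNReal.ofReal (√(K * a)) := by
  have h : ∀ p ∈ Ioc (0 : ℝ) a, ENNReal.ofReal (1 / 2 * √(K * p) / p) =
      ENNReal.ofReal (√K / 2 / √p) := fun p _ => by
    rw [sqrt_mul hK, mul_div_assoc, mul_div_assoc, sqrt_div_self']
    ring_nf
  rw [setLIntegral_congr_fun measurableSet_Ioc h, lintegral_Ioc_div_sqrt (by positivity) ha,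
    sqrt_mul hK]
  ring_nf

theorem lintegral_Ioi_constantProduct_liquidity_div_sq (hK : 0 ≤ K) {a : ℝ} (ha : 0 < a) :
    ∫⁻ p in Ioi a, ENNReal.ofReal (1 / 2 * √(K * p) / p ^ 2) = ENNReal.ofReal (√(K / a)) := by
  have h : ∀ p ∈ Ioi a, ENNReal.ofReal (1 / 2 * √(K * p) / p ^ 2) =
      ENNReal.ofReal (√K / 2 / (p * √p)) := fun p hp => by
    have hp : 0 < p := ha.trans hp
    rw [show p ^ 2 = p * √p * √p by rw [mul_assoc, mul_self_sqrt hp.le, sq], sqrt_mul hK,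
      ← mul_assoc, mul_div_mul_right _ _ (sqrt_pos.2 hp).ne', div_div]
    ring_nf
  rw [setLIntegral_congr_fun measurableSet_Ioi h, lintegral_Ioi_div_mul_sqrt (by positivity) ha,
    sqrt_div hK]
  ring_nf

theorem Ineff_box_constantProduct_liquidity {PX PY : ℝ} (hPX : 0 < PX) (hPY : 0 < PY)
    (hK : 0 < K) :
    Ineff (fun q => if q.1 ∈ Ioc 0 PX ∧ q.2 ∈ Ioc 0 PY then 1 else 0)
        (fun p => 1 / 2 * √(K * p)) = ENNReal.ofReal (8 * √(PX * PY) / √K) := by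
  have h : ∀ p ∈ Ioi (0 : ℝ),
      ENNReal.ofReal (boxWeight PX PY p) / ENNReal.ofReal (1 / 2 * √(K * p)) =
        ENNReal.ofReal (2 / √K) * ENNReal.ofReal (boxWeight PX PY p / √p) := fun p hp => by
    have hp : 0 < √p := sqrt_pos.2 hp
    have hsK : 0 < √K := sqrt_pos.2 hK
    rw [sqrt_mul hK.le, ← ENNReal.ofReal_div_of_pos (by positivity),
      ← ENNReal.ofReal_mul (by positivity)]
    congr 1
    field_simp
  rw [Ineff_box (by fun_prop), setLIntegral_congr_fun measurableSet_Ioi h,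
    lintegral_const_mul' _ _ ENNReal.ofReal_ne_top, lintegral_boxWeight_div_sqrt hPX hPY,
    ← ENNReal.ofReal_mul (by positivity)]
  ring_nf

end constantProduct

theorem stmt_12 (PX PY B : ℝ) (hPX : 0 < PX) (hPY : 0 < PY) (hB : 0 < B)
    (ψ : ℝ × ℝ → ℝ)
    (hψ : ψ = fun q => if q.1 ∈ Set.Ioc (0:ℝ) PX ∧ q.2 ∈ Set.Ioc (0:ℝ) PY
        then 1 else 0)
    (X0 Y0 : ℝ) (hX0 : X0 = B / (2 * PX)) (hY0 : Y0 = B / (2 * PY))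
    (L : ℝ → ℝ) (hL : L = fun p => (1 / 2) * Real.sqrt (X0 * Y0 * p)) :
    (∫⁻ p in Set.Ioc (0:ℝ) (PX / PY), ENNReal.ofReal (L p / p)) = ENNReal.ofReal Y0 ∧
    (∫⁻ p in Set.Ioi (PX / PY), ENNReal.ofReal (L p / p ^ 2)) = ENNReal.ofReal X0 ∧
    PX * X0 + PY * Y0 = B ∧
    Feasible PX PY B L X0 Y0 ∧
    ∀ L' X0' Y0', Feasible PX PY B L' X0' Y0' → Ineff ψ L ≤ Ineff ψ L' := by
  subst hψ hL
  have hX0p : 0 < X0 := hX0 ▸ by positivity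
  have hY0p : 0 < Y0 := hY0 ▸ by positivity
  have hp0 : 0 < PX / PY := div_pos hPX hPY
  have hY : √(X0 * Y0 * (PX / PY)) = Y0 := by
    rw [show X0 * Y0 * (PX / PY) = Y0 ^ 2 by rw [hX0, hY0]; field_simp, sqrt_sq hY0p.le]
  have hX : √(X0 * Y0 / (PX / PY)) = X0 := by
    rw [show X0 * Y0 / (PX / PY) = X0 ^ 2 by rw [hX0, hY0]; field_simp, sqrt_sq hX0p.le]
  have hYint := (lintegral_Ioc_constantProduct_liquidity_div (by positivity) hp0.le).trans
    (congrArg ENNReal.ofReal hY)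
  have hXint := (lintegral_Ioi_constantProduct_liquidity_div_sq (by positivity) hp0).trans
    (congrArg ENNReal.ofReal hX)
  have hbudget : PX * X0 + PY * Y0 = B := by
    rw [hX0, hY0]
    field_simp
    ring
  have hIneff : 8 * √(PX * PY) / √(X0 * Y0) = 16 * (PX * PY) / B := by
    have hPXPY := sq_sqrt (mul_pos hPX hPY).le
    have hK : X0 * Y0 = (B / (2 * √(PX * PY))) ^ 2 := by
      rw [hX0, hY0, div_pow, mul_pow, hPXPY]
      field_simp
    rw [hK, sqrt_sq (by positivity)]
    field_simp
    rw [hPXPY]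
    ring
  refine ⟨hYint, hXint, hbudget, ⟨by fun_prop, fun p _ => by positivity, hX0p.le, hY0p.le,
    hYint.le, hXint.le, hbudget.le⟩, fun L' X0' Y0' hF => ?_⟩
  rw [Ineff_box_constantProduct_liquidity hPX hPY (by positivity), hIneff]
  exact hF.ofReal_le_Ineff_box hPX hPY hB
end
end
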